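/- Local mass bound on a single interval (inequality (3.31) in the proof of Theorem 3.2): under the Gauss collocation equations on a single interval I = I_n with Hermitian a and ⟨G(v), v⟩ ∈ ℝ for all v ∈ V, one has ∫_{I_n} ‖(P^n u_h)(t)‖² dt ≤ τ·‖u_h(t_{n−1})‖². -/

import Mathlib

/-!
Taking `v = u_h(t_{nj})` in the collocation equation (i) and its imaginary part shows, because `a`
is Hermitian and `⟨G v, v⟩` is real, that the real polynomial `Φ(t) = ‖u_h(t)‖²` (degree `≤ 2k`,
coefficient of `t^{2k}` equal to `‖leading coefficient of u_h‖² ≥ 0`) has `Φ'(t_{nj}) = 0` at all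
Gauss points. Integrating by parts,
`∫_{I_n} Φ = τ Φ(t_{n-1}) + ∫_{I_n} (t_{n-1} + τ - t) Φ'(t) dt`.
The last integrand has degree `≤ 2k` and vanishes at the Gauss points, so it is a multiple of the
node polynomial `N = ∏ (t - t_{nj})`; as `N` is a rescaled Legendre polynomial it is
`L²(I_n)`-orthogonal to degree `< k`, whence that integral is `-2k · Φ_{2k} · ∫ N² ≤ 0`.
Finally `P^n` is an orthogonal projection, so `∫ ‖P^n u_h‖² ≤ ∫ Φ`.
-/

open MeasureTheory

/-- The (unnormalized) Legendre polynomial of degree `k`: `d^k/dx^k [(x² - 1)^k]`. -/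
noncomputable def legendre (k : ℕ) : Polynomial ℝ :=
  Polynomial.derivative^[k] ((Polynomial.X ^ 2 - 1 : Polynomial ℝ) ^ k)

/-- `f : ℝ → X` is an `X`-valued polynomial of degree at most `m`. -/
def IsPolyDeg (X : Type*) [AddCommGroup X] [Module ℝ X] (m : ℕ) (f : ℝ → X) : Prop :=
  ∃ φ : Fin (m + 1) → X, ∀ t : ℝ, f t = ∑ i : Fin (m + 1), t ^ (i : ℕ) • φ i

/-- `p` is the L²(a,b)-orthogonal projection of `u` onto `X`-valued polynomials of
degree ≤ k-1. -/
def IsL2ProjOn (X : Type*) [NormedAddCommGroup X] [InnerProductSpace ℂ X]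
    (a b : ℝ) (k : ℕ) (u p : ℝ → X) : Prop :=
  IsPolyDeg X (k - 1) p ∧
    ∀ χ : ℝ → X, IsPolyDeg X (k - 1) χ →
      (∫ t in a..b, (inner ℂ (u t - p t) (χ t) : ℂ)) = 0

open Polynomial intervalIntegral Lagrange Finset

theorem IsPolyDeg.continuous {X : Type*} [NormedAddCommGroup X] [NormedSpace ℝ X] {m : ℕ}
    {f : ℝ → X} (hf : IsPolyDeg X m f) : Continuous f := by
  obtain ⟨φ, hφ⟩ := hf
  rw [funext hφ]
  fun_prop

theorem integral_iterate_derivative_mul_eq_zero {k j : ℕ} (hj : j ≤ k) {q : ℝ[X]}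
    (hq : q.degree < j) :
    ∫ x in (-1 : ℝ)..1, (derivative^[j] ((X ^ 2 - 1 : ℝ[X]) ^ k)).eval x * q.eval x = 0 := by
  induction j generalizing q with
  | zero =>
    simp [degree_eq_bot.mp (by simpa using hq)]
  | succ j ih =>
    set p := derivative^[j] ((X ^ 2 - 1 : ℝ[X]) ^ k)
    have hboundary : ∀ x : ℝ, x ^ 2 = 1 → p.eval x = 0 := fun x hx => by
      obtain ⟨r, hr⟩ := pow_sub_dvd_iterate_derivative_pow (X ^ 2 - 1 : ℝ[X]) k j
      simp [p, hr, hx, zero_pow (Nat.sub_ne_zero_of_lt hj)]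
    have hq' : (derivative q).degree < j := by
      rw [degree_lt_iff_coeff_zero] at hq ⊢
      intro m hm
      rw [coeff_derivative, hq (m + 1) (by omega), zero_mul]
    have hparts := integral_mul_deriv_eq_deriv_mul (a := -1) (b := 1)
      (fun x _ => p.hasDerivAt x) (fun x _ => q.hasDerivAt x)
      (p.derivative.continuous.intervalIntegrable _ _)
      (q.derivative.continuous.intervalIntegrable _ _)
    rw [ih (by omega) hq', hboundary 1 (by norm_num), hboundary (-1) (by norm_num)] at hparts
    rw [Function.iterate_succ_apply']
    linarith

theorem monic_X_sq_sub_one_pow (k : ℕ) : ((X ^ 2 - 1 : ℝ[X]) ^ k).Monic := by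
  simpa using ((monic_X_pow_sub_C (1 : ℝ) two_ne_zero).pow k)

theorem natDegree_X_sq_sub_one_pow (k : ℕ) : ((X ^ 2 - 1 : ℝ[X]) ^ k).natDegree = k + k := by
  rw [natDegree_pow, ← C_1, natDegree_X_pow_sub_C]
  ring

theorem coeff_legendre_self (k : ℕ) : (legendre k).coeff k = (k + k).descFactorial k := by
  rw [legendre, coeff_iterate_derivative, ← natDegree_X_sq_sub_one_pow,
    (monic_X_sq_sub_one_pow k).coeff_natDegree, nsmul_one]

theorem legendre_ne_zero (k : ℕ) : legendre k ≠ 0 := by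
  intro h
  have := coeff_legendre_self k
  rw [h, coeff_zero, eq_comm, Nat.cast_eq_zero, Nat.descFactorial_eq_zero_iff_lt] at this
  omega

theorem natDegree_legendre_le (k : ℕ) : (legendre k).natDegree ≤ k :=
  (natDegree_iterate_derivative _ _).trans (by rw [natDegree_X_sq_sub_one_pow]; omega)

theorem integral_legendre_mul_eq_zero {k : ℕ} {q : ℝ[X]} (hq : q.degree < k) :
    ∫ x in (-1 : ℝ)..1, (legendre k).eval x * q.eval x = 0 :=
  integral_iterate_derivative_mul_eq_zero le_rfl hq

theorem nodal_univ_dvd_of_eval_eq_zero {K ι : Type*} [Field K] [Fintype ι] {v : ι → K}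
    (hv : Function.Injective v) {p : K[X]} (hp : ∀ i, p.eval (v i) = 0) : nodal univ v ∣ p := by
  rw [nodal_eq]
  exact Fintype.prod_dvd_of_coprime (pairwise_coprime_X_sub_C hv) fun i => dvd_iff_isRoot.2 (hp i)

theorem integral_nodal_mul_eq_zero {k : ℕ} {c : Fin k → ℝ} (hc : Function.Injective c)
    (hroot : ∀ j, (legendre k).eval (c j) = 0) {q : ℝ[X]} (hq : q.degree < k) :
    ∫ x in (-1 : ℝ)..1, (nodal univ c).eval x * q.eval x = 0 := by
  have hdvd : nodal univ c ∣ legendre k := nodal_univ_dvd_of_eval_eq_zero hc hroot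
  have hlegendre := eq_leadingCoeff_mul_of_monic_of_dvd_of_natDegree_le nodal_monic hdvd
    (by simpa [natDegree_nodal] using natDegree_legendre_le k)
  have := integral_legendre_mul_eq_zero hq
  rw [hlegendre] at this
  simpa [mul_assoc, legendre_ne_zero] using this

theorem integral_nodal_affine_mul_eq_zero {k : ℕ} {c : Fin k → ℝ} (hc : Function.Injective c)
    (hroot : ∀ j, (legendre k).eval (c j) = 0) {t₀ τ : ℝ} (hτ : τ ≠ 0) {q : ℝ[X]}
    (hq : q.degree < k) :
    ∫ t in t₀..t₀ + τ, (nodal univ fun j => t₀ + (1 + c j) * τ / 2).eval t * q.eval t = 0 := by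
  have hτ2 : τ / 2 ≠ 0 := by positivity
  set affine : ℝ[X] := C (τ / 2) * X + C (t₀ + τ / 2)
  have hnodal (x : ℝ) : (nodal univ fun j => t₀ + (1 + c j) * τ / 2).eval (affine.eval x)
      = (τ / 2) ^ k * (nodal univ c).eval x := by
    simp only [eval_nodal, affine, eval_add, eval_mul, eval_C, eval_X]
    rw [prod_congr rfl fun j _ => show τ / 2 * x + (t₀ + τ / 2) - (t₀ + (1 + c j) * τ / 2)
      = τ / 2 * (x - c j) by ring, prod_mul_distrib, prod_const, card_univ, Fintype.card_fin]
  have hdeg : (q.comp affine).degree < k := by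
    rwa [degree_comp (by rw [degree_linear hτ2]; exact zero_lt_one), degree_linear hτ2, mul_one]
  have hchange := integral_comp_mul_add (a := -1) (b := 1)
    (fun t => (nodal univ fun j => t₀ + (1 + c j) * τ / 2).eval t * q.eval t) hτ2 (t₀ + τ / 2)
  rw [show τ / 2 * (-1) + (t₀ + τ / 2) = t₀ by ring,
    show τ / 2 * 1 + (t₀ + τ / 2) = t₀ + τ by ring] at hchange
  have heval (x : ℝ) : τ / 2 * x + (t₀ + τ / 2) = affine.eval x := by simp [affine]
  simp only [heval, hnodal, ← eval_comp, mul_assoc, intervalIntegral.integral_const_mul,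
    integral_nodal_mul_eq_zero hc hroot hdeg, mul_zero] at hchange
  exact (smul_eq_zero.mp hchange.symm).resolve_left (inv_ne_zero hτ2)

theorem integral_eq_coeff_mul_integral_sq {a b : ℝ} {k : ℕ} {N f : ℝ[X]} (hN : N.Monic)
    (hNdeg : N.natDegree = k)
    (horth : ∀ q : ℝ[X], q.degree < k → ∫ t in a..b, N.eval t * q.eval t = 0)
    (hdvd : N ∣ f) (hf : f.natDegree ≤ k + k) :
    ∫ t in a..b, f.eval t = f.coeff (k + k) * ∫ t in a..b, N.eval t ^ 2 := by
  obtain ⟨s, rfl⟩ := hdvd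
  have hs : s.natDegree ≤ k := by
    rcases eq_or_ne s 0 with rfl | hs0
    · simp
    · rw [hN.natDegree_mul' hs0, hNdeg] at hf
      omega
  rw [coeff_mul_add_eq_of_natDegree_le hNdeg.le hs, ← hNdeg, hN.coeff_natDegree, one_mul, hNdeg]
  set r := s - C (s.coeff k) * N
  have hr : r.degree < k := by
    rw [degree_lt_iff_coeff_zero]
    intro m hm
    rcases hm.eq_or_lt with rfl | hm
    · rw [coeff_sub, coeff_C_mul, ← hNdeg, hN.coeff_natDegree, hNdeg, mul_one, sub_self]
    · rw [coeff_sub, coeff_C_mul, coeff_eq_zero_of_natDegree_lt (hs.trans_lt hm),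
        coeff_eq_zero_of_natDegree_lt (hNdeg.trans_lt hm), mul_zero, sub_zero]
  have hsplit (t : ℝ) : (N * s).eval t = N.eval t * r.eval t + s.coeff k * N.eval t ^ 2 := by
    simp only [r, eval_mul, eval_sub, eval_C]
    ring
  simp only [hsplit]
  rw [integral_add (f := fun t => N.eval t * r.eval t) (g := fun t => s.coeff k * N.eval t ^ 2)
    ((N.continuous.mul r.continuous).intervalIntegrable _ _)
    ((continuous_const.mul (N.continuous.pow 2)).intervalIntegrable _ _), horth r hr, zero_add,
    intervalIntegral.integral_const_mul]

theorem integral_eval_eq_mul_eval_add_integral (P : ℝ[X]) (a b : ℝ) :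
    ∫ t in a..b, P.eval t = (b - a) * P.eval a + ∫ t in a..b, (b - t) * (derivative P).eval t := by
  have hparts := integral_mul_deriv_eq_deriv_mul (a := a) (b := b) (u := fun t => b - t)
    (u' := fun _ => -1) (fun t _ => (hasDerivAt_id t).const_sub b) (fun t _ => P.hasDerivAt t)
    intervalIntegrable_const (P.derivative.continuous.intervalIntegrable _ _)
  simp only [sub_self, zero_mul, zero_sub, neg_one_mul, intervalIntegral.integral_neg] at hparts
  linarith

theorem natDegree_C_sub_X_mul_derivative_le {R : Type*} [CommRing R] (b : R) {P : R[X]} {n : ℕ}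
    (hP : P.natDegree ≤ n) : ((C b - X) * derivative P).natDegree ≤ n := by
  rcases Nat.eq_zero_or_pos P.natDegree with h0 | hpos
  · simp [derivative_of_natDegree_zero h0]
  · refine natDegree_mul_le.trans ?_
    have := natDegree_derivative_le P
    have : (C b - X).natDegree ≤ 1 := natDegree_sub_le_of_le (natDegree_C b).le natDegree_X_le
    omega

theorem coeff_C_sub_X_mul_derivative {R : Type*} [CommRing R] (b : R) {P : R[X]} {n : ℕ}
    (hP : P.natDegree ≤ n) : ((C b - X) * derivative P).coeff n = -(n * P.coeff n) := by
  rw [sub_mul, coeff_sub, coeff_C_mul, coeff_derivative,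
    coeff_eq_zero_of_natDegree_lt (Nat.lt_succ_of_le hP), zero_mul, mul_zero, zero_sub]
  cases n with
  | zero => simp
  | succ n => rw [coeff_X_mul, coeff_derivative]; push_cast; ring

theorem integral_le_of_nodal_dvd_derivative {a b : ℝ} (hab : a ≤ b) {k : ℕ} {N P : ℝ[X]}
    (hN : N.Monic) (hNdeg : N.natDegree = k)
    (horth : ∀ q : ℝ[X], q.degree < k → ∫ t in a..b, N.eval t * q.eval t = 0)
    (hdvd : N ∣ derivative P) (hP : P.natDegree ≤ k + k) (htop : 0 ≤ P.coeff (k + k)) :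
    ∫ t in a..b, P.eval t ≤ (b - a) * P.eval a := by
  have hremainder := integral_eq_coeff_mul_integral_sq hN hNdeg horth
    (hdvd.mul_left (C b - X)) (natDegree_C_sub_X_mul_derivative_le b hP)
  rw [coeff_C_sub_X_mul_derivative b hP] at hremainder
  simp only [eval_mul, eval_sub, eval_C, eval_X] at hremainder
  have hsq : 0 ≤ ∫ t in a..b, N.eval t ^ 2 := integral_nonneg hab fun t _ => sq_nonneg _
  rw [integral_eval_eq_mul_eval_add_integral, hremainder]
  nlinarith [mul_nonneg (mul_nonneg (Nat.cast_nonneg (k + k)) htop) hsq]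

section InnerProductSpace

variable {V : Type*} [NormedAddCommGroup V] [InnerProductSpace ℂ V]

theorem re_inner_eq_zero_of_collocation {a : V → V → ℂ}
    (ha_herm : ∀ v w : V, a v w = starRingEnd ℂ (a w v)) {G : V → V}
    (hG : ∀ v : V, (inner ℂ v (G v) : ℂ).im = 0) {u u' : V} {r : ℝ}
    (h : ∀ v : V, Complex.I * inner ℂ v u' + a u v - r * inner ℂ v (G u) = 0) :
    (inner ℂ u u' : ℂ).re = 0 := by
  have ha : (a u u).im = 0 := by
    have := congrArg Complex.im (ha_herm u u)
    rw [Complex.conj_im] at this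
    linarith
  simpa [ha, hG u] using congrArg Complex.im (h u)

noncomputable def normSqPoly {m : ℕ} (φ : Fin (m + 1) → V) : ℝ[X] :=
  ∑ i, ∑ j, C (inner ℂ (φ i) (φ j) : ℂ).re * X ^ ((i : ℕ) + j)

theorem eval_normSqPoly {m : ℕ} (φ : Fin (m + 1) → V) (t : ℝ) :
    (normSqPoly φ).eval t = ‖∑ i : Fin (m + 1), t ^ (i : ℕ) • φ i‖ ^ 2 := by
  rw [← inner_self_eq_norm_sq (𝕜 := ℂ), sum_inner, map_sum, normSqPoly, eval_finsetSum]
  refine sum_congr rfl fun i _ => ?_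
  rw [inner_sum, map_sum, eval_finsetSum]
  refine sum_congr rfl fun j _ => ?_
  simp only [RCLike.real_smul_eq_coe_smul (K := ℂ), inner_smul_left, inner_smul_right,
    RCLike.conj_ofReal, RCLike.re_ofReal_mul, RCLike.re_to_complex, eval_mul, eval_C, eval_pow,
    eval_X, pow_add]
  ring

theorem natDegree_normSqPoly_le {m : ℕ} (φ : Fin (m + 1) → V) :
    (normSqPoly φ).natDegree ≤ m + m := by
  refine natDegree_sum_le_of_forall_le _ _ fun i _ =>
    natDegree_sum_le_of_forall_le _ _ fun j _ => ?_
  exact (natDegree_C_mul_le _ _).trans <| (natDegree_X_pow_le _).trans (by omega)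

theorem coeff_normSqPoly_add_self {m : ℕ} (φ : Fin (m + 1) → V) :
    (normSqPoly φ).coeff (m + m) = ‖φ (Fin.last m)‖ ^ 2 := by
  simp only [normSqPoly, finsetSum_coeff, coeff_C_mul_X_pow]
  rw [Fintype.sum_eq_single (Fin.last m), Fintype.sum_eq_single (Fin.last m),
    if_pos (by simp), ← inner_self_eq_norm_sq (𝕜 := ℂ), RCLike.re_to_complex]
  · intro j hj
    rw [if_neg (by have := Fin.val_lt_last hj; simp; omega)]
  · intro i hi
    refine Fintype.sum_eq_zero _ fun j => if_neg ?_
    have := Fin.val_lt_last hi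
    have := j.is_le
    omega

theorem eval_derivative_normSqPoly {m : ℕ} {φ : Fin (m + 1) → V} {u : ℝ → V}
    (hu : ∀ t, u t = ∑ i : Fin (m + 1), t ^ (i : ℕ) • φ i) (t : ℝ) :
    (derivative (normSqPoly φ)).eval t = 2 * (inner ℂ (u t) (deriv u t) : ℂ).re := by
  let := InnerProductSpace.rclikeToReal ℂ V
  have hdiff : Differentiable ℝ u := by
    rw [funext hu]
    fun_prop
  have hderiv := (hdiff t).hasDerivAt.norm_sq
  rw [real_inner_eq_re_inner] at hderiv
  refine ((normSqPoly φ).hasDerivAt t).unique ?_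
  simpa [eval_normSqPoly, ← hu] using hderiv

theorem integral_norm_sq_le_of_integral_inner_eq_zero {a b : ℝ} (hab : a ≤ b) {u p : ℝ → V}
    (hu : Continuous u) (hp : Continuous p)
    (horth : ∫ t in a..b, (inner ℂ (u t - p t) (p t) : ℂ) = 0) :
    ∫ t in a..b, ‖p t‖ ^ 2 ≤ ∫ t in a..b, ‖u t‖ ^ 2 := by
  have hre : ∫ t in a..b, RCLike.re (inner ℂ (u t - p t) (p t) : ℂ) = 0 := by
    rw [intervalIntegral_re ((by fun_prop : Continuous _).intervalIntegrable _ _), horth, map_zero]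
  have hpythagoras (t : ℝ) : ‖u t‖ ^ 2
      = ‖p t‖ ^ 2 + (‖u t - p t‖ ^ 2 + 2 * RCLike.re (inner ℂ (u t - p t) (p t) : ℂ)) := by
    have := norm_add_sq (𝕜 := ℂ) (u t - p t) (p t)
    rw [sub_add_cancel] at this
    rw [this]
    ring
  have hdefect : 0 ≤ ∫ t in a..b, ‖u t - p t‖ ^ 2 := integral_nonneg hab fun t _ => by positivity
  calc ∫ t in a..b, ‖p t‖ ^ 2
      ≤ (∫ t in a..b, ‖p t‖ ^ 2) + ((∫ t in a..b, ‖u t - p t‖ ^ 2)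
          + 2 * ∫ t in a..b, RCLike.re (inner ℂ (u t - p t) (p t) : ℂ)) := by
        rw [hre]
        linarith
    _ = ∫ t in a..b, ‖u t‖ ^ 2 := by
        simp only [hpythagoras]
        rw [← intervalIntegral.integral_const_mul, intervalIntegral.integral_add,
          intervalIntegral.integral_add] <;>
          exact (by fun_prop : Continuous _).intervalIntegrable _ _

end InnerProductSpace

theorem local_mass_bound_general
    (k : ℕ) (t₀ τ : ℝ) (hτ : 0 < τ)
    -- the Gauss points of [-1,1]: the k roots of the Legendre polynomial of degree k
    (c : Fin k → ℝ) (hmono : StrictMono c)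
    (hroot : ∀ j, (legendre k).eval (c j) = 0)
    -- V : a finite-dimensional complex inner product space
    (V : Type*) [NormedAddCommGroup V] [InnerProductSpace ℂ V]
    -- a : a Hermitian sesquilinear form (paper's convention: linear in the first argument)
    (a : V → V → ℂ)
    (ha_herm : ∀ v w : V, a v w = starRingEnd ℂ (a w v))
    -- G : an arbitrary map such that ⟨G v, v⟩ is real
    -- (paper's ⟨x, y⟩, linear in x, is Mathlib's `inner y x`)
    (G : V → V)
    (hG : ∀ v : V, (inner ℂ v (G v) : ℂ).im = 0)
    -- u_h, r_h : polynomials of degree ≤ k in time on I_n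
    (uh : ℝ → V) (rh : ℝ → ℝ)
    (hupoly : IsPolyDeg V k uh)
    -- Gauss collocation equation (i) at the Gauss points t_{nj} = t₀ + (1 + c_j) τ / 2
    (hu_eq : ∀ j : Fin k, ∀ v : V,
      Complex.I * (inner ℂ v (deriv uh (t₀ + (1 + c j) * τ / 2)) : ℂ)
        + a (uh (t₀ + (1 + c j) * τ / 2)) v
        - (rh (t₀ + (1 + c j) * τ / 2) : ℂ)
            * (inner ℂ v (G (uh (t₀ + (1 + c j) * τ / 2))) : ℂ) = 0) :
    -- conclusion: ∫_{I_n} ‖(P^n u_h)(t)‖² dt ≤ τ ‖u_h(t₀)‖²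
    ∀ Puh : ℝ → V, IsL2ProjOn V t₀ (t₀ + τ) k uh Puh →
      (∫ t in t₀..(t₀ + τ), ‖Puh t‖ ^ 2) ≤ τ * ‖uh t₀‖ ^ 2 := by
  rintro Puh ⟨hPpoly, hPorth⟩
  have huh := hupoly.continuous
  obtain ⟨φ, hφ⟩ := hupoly
  have hnodes : Function.Injective fun j => t₀ + (1 + c j) * τ / 2 := fun i j hij =>
    hmono.injective (by simpa [hτ.ne'] using hij)
  have hmass (j : Fin k) : (derivative (normSqPoly φ)).eval (t₀ + (1 + c j) * τ / 2) = 0 := by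
    rw [eval_derivative_normSqPoly hφ, re_inner_eq_zero_of_collocation ha_herm hG (hu_eq j),
      mul_zero]
  calc ∫ t in t₀..t₀ + τ, ‖Puh t‖ ^ 2
      ≤ ∫ t in t₀..t₀ + τ, ‖uh t‖ ^ 2 := integral_norm_sq_le_of_integral_inner_eq_zero
        (by linarith) huh hPpoly.continuous (hPorth Puh hPpoly)
    _ = ∫ t in t₀..t₀ + τ, (normSqPoly φ).eval t := by simp only [eval_normSqPoly, hφ]
    _ ≤ (t₀ + τ - t₀) * (normSqPoly φ).eval t₀ := integral_le_of_nodal_dvd_derivative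
        (by linarith) nodal_monic (by simp [natDegree_nodal])
        (fun q hq => integral_nodal_affine_mul_eq_zero hmono.injective hroot hτ.ne' hq)
        (nodal_univ_dvd_of_eval_eq_zero hnodes hmass) (natDegree_normSqPoly_le φ)
        (coeff_normSqPoly_add_self φ ▸ sq_nonneg _)
    _ = τ * ‖uh t₀‖ ^ 2 := by rw [eval_normSqPoly, hφ]; ring

theorem local_mass_bound
    (k : ℕ) (hk : 1 ≤ k) (t₀ τ : ℝ) (hτ : 0 < τ)
    -- the Gauss points of [-1,1]: the k roots of the Legendre polynomial of degree k
    (c : Fin k → ℝ) (hmono : StrictMono c)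
    (hroot : ∀ j, (legendre k).eval (c j) = 0)
    (hmem : ∀ j, c j ∈ Set.Ioo (-1 : ℝ) 1)
    -- V : a finite-dimensional complex inner product space
    (V : Type*) [NormedAddCommGroup V] [InnerProductSpace ℂ V] [FiniteDimensional ℂ V]
    -- a : a Hermitian sesquilinear form (paper's convention: linear in the first argument)
    (a : V → V → ℂ)
    (ha_add : ∀ v₁ v₂ w : V, a (v₁ + v₂) w = a v₁ w + a v₂ w)
    (ha_smul : ∀ (z : ℂ) (v w : V), a (z • v) w = z * a v w)
    (ha_herm : ∀ v w : V, a v w = starRingEnd ℂ (a w v))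
    -- G : an arbitrary map such that ⟨G v, v⟩ is real
    -- (paper's ⟨x, y⟩, linear in x, is Mathlib's `inner y x`)
    (G : V → V)
    (hG : ∀ v : V, (inner ℂ v (G v) : ℂ).im = 0)
    -- u_h, r_h : polynomials of degree ≤ k in time on I_n
    (uh : ℝ → V) (rh : ℝ → ℝ)
    (hupoly : IsPolyDeg V k uh) (hrpoly : IsPolyDeg ℝ k rh)
    -- Gauss collocation equation (i) at the Gauss points t_{nj} = t₀ + (1 + c_j) τ / 2
    (hu_eq : ∀ j : Fin k, ∀ v : V,
      Complex.I * (inner ℂ v (deriv uh (t₀ + (1 + c j) * τ / 2)) : ℂ)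
        + a (uh (t₀ + (1 + c j) * τ / 2)) v
        - (rh (t₀ + (1 + c j) * τ / 2) : ℂ)
            * (inner ℂ v (G (uh (t₀ + (1 + c j) * τ / 2))) : ℂ) = 0)
    -- Gauss collocation equation (ii)
    (hr_eq : ∀ j : Fin k,
      deriv rh (t₀ + (1 + c j) * τ / 2)
        = (1 / 2) * ((inner ℂ (deriv uh (t₀ + (1 + c j) * τ / 2))
            (G (uh (t₀ + (1 + c j) * τ / 2)))) : ℂ).re) :
    -- conclusion: ∫_{I_n} ‖(P^n u_h)(t)‖² dt ≤ τ ‖u_h(t₀)‖²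
    ∀ Puh : ℝ → V, IsL2ProjOn V t₀ (t₀ + τ) k uh Puh →
      (∫ t in t₀..(t₀ + τ), ‖Puh t‖ ^ 2) ≤ τ * ‖uh t₀‖ ^ 2 :=
  local_mass_bound_general k t₀ τ hτ c hmono hroot V a ha_herm G hG uh rh hupoly hu_eq
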